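/- Let 0 < c₁ ≤ c₂, C ≥ 0, A the matrix with rows aᵢ*, and L_avg(z) = Σᵢ ½(√(|⟨aᵢ,z⟩|² + c₁) + √(|⟨aᵢ,z⟩|² + c₂) − C)². Then for all z, v ∈ ℂⁿ, (v,v̄)*∇²L_avg(z)(v,v̄) ≤ ½(3 + √(c₂/c₁))·‖A‖²·‖(v,v̄)‖₂². -/

import Mathlib

/-! Along the line `t ↦ z + t v` each `|⟨aᵢ, z + t v⟩|²` is a quadratic `p + q t + r t²` with
`q² ≤ 4 p r` (Cauchy–Schwarz), so the `i`-th summand `ℓ(p + q t + r t²)`, with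
`ℓ(s) = ½(√(s + c₁) + √(s + c₂) - C)²`, has second derivative `ℓ''(p) q² + 2 r ℓ'(p)` at `0`,
which is at most `2 r · max (ℓ'(p), 2 p ℓ''(p) + ℓ'(p))`. Writing `a = √(p + c₁) ≤ b = √(p + c₂)`,
both are bounded by `(a + b)² / (2 a b) ≤ ½(3 + √(c₂ / c₁))` because `b ≤ √(c₂ / c₁) a`; summing,
`∑ᵢ rᵢ = ‖A v‖² ≤ ‖A‖² ‖v‖²`. -/

open Real
open scoped InnerProductSpace

theorem norm_add_smul_sq {F : Type*} [NormedAddCommGroup F] [InnerProductSpace ℝ F]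
    (x y : F) (t : ℝ) : ‖x + t • y‖ ^ 2 = ‖x‖ ^ 2 + 2 * ⟪x, y⟫_ℝ * t + ‖y‖ ^ 2 * t ^ 2 := by
  rw [norm_add_sq_real, real_inner_smul_right, norm_smul, mul_pow, Real.norm_eq_abs, sq_abs]
  ring

theorem two_mul_real_inner_sq_le {F : Type*} [NormedAddCommGroup F] [InnerProductSpace ℝ F]
    (x y : F) : (2 * ⟪x, y⟫_ℝ) ^ 2 ≤ 4 * ‖x‖ ^ 2 * ‖y‖ ^ 2 := by
  have h := abs_real_inner_le_norm x y
  have h0 := abs_nonneg ⟪x, y⟫_ℝ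
  nlinarith [sq_abs ⟪x, y⟫_ℝ, mul_le_mul h h h0 (by positivity)]

theorem hasDerivAt_quadratic (p q r t : ℝ) :
    HasDerivAt (fun t => p + q * t + r * t ^ 2) (q + 2 * r * t) t := by
  have h := ((hasDerivAt_id t).const_mul q).const_add p |>.add ((hasDerivAt_pow 2 t).const_mul r)
  exact h.congr_deriv (by simp; ring)

theorem iteratedDeriv_two_sum_comp_quadratic {ι : Type*} [Fintype ι] {f f' f'' : ℝ → ℝ}
    (hf : ∀ x, 0 ≤ x → HasDerivAt f (f' x) x) (hf' : ∀ x, 0 ≤ x → HasDerivAt f' (f'' x) x)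
    {p q r : ι → ℝ} (hpqr : ∀ i t, 0 ≤ p i + q i * t + r i * t ^ 2) :
    iteratedDeriv 2 (fun t => ∑ i, f (p i + q i * t + r i * t ^ 2)) 0 =
      ∑ i, (f'' (p i) * q i ^ 2 + f' (p i) * (2 * r i)) := by
  have hderiv : ∀ t, HasDerivAt (fun t => ∑ i, f (p i + q i * t + r i * t ^ 2))
      (∑ i, f' (p i + q i * t + r i * t ^ 2) * (q i + 2 * r i * t)) t := fun t =>
    HasDerivAt.fun_sum fun i _ => (hf _ (hpqr i t)).comp t (hasDerivAt_quadratic _ _ _ t)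
  have hderiv2 : HasDerivAt (fun t => ∑ i, f' (p i + q i * t + r i * t ^ 2) * (q i + 2 * r i * t))
      (∑ i, (f'' (p i) * q i ^ 2 + f' (p i) * (2 * r i))) 0 := by
    refine HasDerivAt.fun_sum fun i _ => ?_
    have hq := hasDerivAt_quadratic (p i) (q i) (r i) 0
    have h := ((hf' _ (hpqr i 0)).comp 0 hq).mul
      (((hasDerivAt_id (0 : ℝ)).const_mul (2 * r i)).const_add (q i))
    exact h.congr_deriv (by simp; ring)
  rw [iteratedDeriv_succ, iteratedDeriv_one, funext fun t => (hderiv t).deriv]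
  exact hderiv2.deriv

theorem hasDerivAt_sqrt_add_const {c s : ℝ} (h : 0 < s + c) :
    HasDerivAt (fun s => √(s + c)) (1 / (2 * √(s + c))) s :=
  ((hasDerivAt_id s).add_const c).sqrt h.ne'

theorem hasDerivAt_one_div_two_mul_sqrt_add_const {c s : ℝ} (h : 0 < s + c) :
    HasDerivAt (fun s => 1 / (2 * √(s + c))) (-(1 / (4 * √(s + c) ^ 3))) s := by
  have hs : 0 < √(s + c) := sqrt_pos.mpr h
  have h2 := ((hasDerivAt_sqrt_add_const h).const_mul 2).inv (by positivity)
  simp only [one_div]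
  refine h2.congr_deriv ?_
  field_simp
  ring

theorem sq_add_le_of_le_mul {a b k : ℝ} (ha : 0 < a) (hab : a ≤ b) (hbk : b ≤ k * a) :
    (a + b) ^ 2 ≤ (3 + k) * (a * b) := by
  nlinarith [mul_le_mul_of_nonneg_left hab ha.le, mul_le_mul_of_nonneg_left hbk (ha.le.trans hab)]

theorem mul_one_div_add_le {a b k u : ℝ} (ha : 0 < a) (hab : a ≤ b) (hbk : b ≤ k * a)
    (hu : u ≤ a + b) : u * (1 / (2 * a) + 1 / (2 * b)) ≤ (3 + k) / 2 := by
  have hb : 0 < b := ha.trans_le hab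
  have hw : 1 / (2 * a) + 1 / (2 * b) = (a + b) / (2 * (a * b)) := by field_simp; ring
  calc u * (1 / (2 * a) + 1 / (2 * b)) ≤ (a + b) * ((a + b) / (2 * (a * b))) := by
        rw [hw]; exact mul_le_mul_of_nonneg_right hu (by positivity)
    _ = (a + b) ^ 2 / (2 * (a * b)) := by ring
    _ ≤ (3 + k) / 2 := by
        rw [div_le_div_iff₀ (by positivity) two_pos]
        nlinarith [sq_add_le_of_le_mul ha hab hbk]

theorem two_mul_add_mul_one_div_add_le {a b k u p : ℝ} (ha : 0 < a) (hab : a ≤ b)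
    (hbk : b ≤ k * a) (hu : u ≤ a + b) (hp : 0 ≤ p) (hpa : p ≤ a ^ 2) :
    2 * p * ((1 / (2 * a) + 1 / (2 * b)) ^ 2 - u * (1 / (4 * a ^ 3) + 1 / (4 * b ^ 3))) +
      u * (1 / (2 * a) + 1 / (2 * b)) ≤ (3 + k) / 2 := by
  have hb : 0 < b := ha.trans_le hab
  set w := 1 / (2 * a) + 1 / (2 * b)
  set w' := 1 / (4 * a ^ 3) + 1 / (4 * b ^ 3)
  have hslope : 2 * p * w' ≤ w := by
    have hab2 : a ^ 2 ≤ b ^ 2 := pow_le_pow_left₀ ha.le hab 2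
    calc 2 * p * w' ≤ 2 * a ^ 2 * w' := by gcongr
      _ = 1 / (2 * a) + a ^ 2 / (2 * b ^ 3) := by simp only [w']; field_simp; ring
      _ ≤ w := by
        have : a ^ 2 / (2 * b ^ 3) ≤ 1 / (2 * b) := by
          rw [div_le_div_iff₀ (by positivity) (by positivity)]
          nlinarith [mul_le_mul_of_nonneg_left hab2 hb.le]
        linarith
  have hcurv : w ^ 2 ≤ (a + b) * w' := by
    have h : (a + b) * w' - w ^ 2 = (a + b) ^ 2 * (a - b) ^ 2 / (4 * a ^ 3 * b ^ 3) := by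
      simp only [w, w']; field_simp; ring
    have : 0 ≤ (a + b) ^ 2 * (a - b) ^ 2 / (4 * a ^ 3 * b ^ 3) := by positivity
    linarith
  calc 2 * p * (w ^ 2 - u * w') + u * w = 2 * p * w ^ 2 + u * (w - 2 * p * w') := by ring
    _ ≤ 2 * p * ((a + b) * w') + (a + b) * (w - 2 * p * w') := by
        gcongr
    _ = (a + b) * w := by ring
    _ ≤ (3 + k) / 2 := mul_one_div_add_le ha hab hbk le_rfl

theorem sqrt_add_le_sqrt_div_mul_sqrt_add {c₁ c₂ s : ℝ} (hc₁ : 0 < c₁) (hc : c₁ ≤ c₂)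
    (hs : 0 ≤ s) : √(s + c₂) ≤ √(c₂ / c₁) * √(s + c₁) := by
  rw [← sqrt_mul (div_nonneg (hc₁.le.trans hc) hc₁.le)]
  refine sqrt_le_sqrt ?_
  rw [div_mul_eq_mul_div, le_div_iff₀ hc₁]
  nlinarith

theorem mul_sq_add_mul_two_mul_le {d₁ d₂ p q r M : ℝ} (hd₁ : d₁ ≤ M) (hd₂ : 2 * p * d₂ + d₁ ≤ M)
    (hr : 0 ≤ r) (hq : q ^ 2 ≤ 4 * p * r) : d₂ * q ^ 2 + d₁ * (2 * r) ≤ 2 * M * r := by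
  rcases le_or_gt d₂ 0 with hd | hd
  · nlinarith [mul_nonpos_of_nonpos_of_nonneg hd (sq_nonneg q)]
  · nlinarith [mul_le_mul_of_nonneg_left hq hd.le]

section VarianceStabilizedLoss

variable (c₁ c₂ C : ℝ)

noncomputable def vsLoss (s : ℝ) : ℝ :=
  1 / 2 * (√(s + c₁) + √(s + c₂) - C) ^ 2

noncomputable def vsLossDeriv (s : ℝ) : ℝ :=
  (√(s + c₁) + √(s + c₂) - C) * (1 / (2 * √(s + c₁)) + 1 / (2 * √(s + c₂)))

noncomputable def vsLossDeriv2 (s : ℝ) : ℝ :=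
  (1 / (2 * √(s + c₁)) + 1 / (2 * √(s + c₂))) ^ 2 -
    (√(s + c₁) + √(s + c₂) - C) * (1 / (4 * √(s + c₁) ^ 3) + 1 / (4 * √(s + c₂) ^ 3))

variable {c₁ c₂ C s : ℝ}

theorem hasDerivAt_vsLoss (h₁ : 0 < s + c₁) (h₂ : 0 < s + c₂) :
    HasDerivAt (vsLoss c₁ c₂ C) (vsLossDeriv c₁ c₂ C s) s := by
  have h := ((((hasDerivAt_sqrt_add_const h₁).add (hasDerivAt_sqrt_add_const h₂)).sub_const C).pow
    2).const_mul (1 / 2 : ℝ)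
  refine h.congr_deriv ?_
  simp only [vsLossDeriv, Pi.add_apply]
  norm_num
  ring

theorem hasDerivAt_vsLossDeriv (h₁ : 0 < s + c₁) (h₂ : 0 < s + c₂) :
    HasDerivAt (vsLossDeriv c₁ c₂ C) (vsLossDeriv2 c₁ c₂ C s) s := by
  have h := (((hasDerivAt_sqrt_add_const h₁).add (hasDerivAt_sqrt_add_const h₂)).sub_const C).mul
    ((hasDerivAt_one_div_two_mul_sqrt_add_const h₁).add
      (hasDerivAt_one_div_two_mul_sqrt_add_const h₂))
  refine h.congr_deriv ?_
  simp only [vsLossDeriv2, Pi.add_apply]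
  ring

theorem vsLossDeriv_le (hc₁ : 0 < c₁) (hc : c₁ ≤ c₂) (hC : 0 ≤ C) (hs : 0 ≤ s) :
    vsLossDeriv c₁ c₂ C s ≤ (3 + √(c₂ / c₁)) / 2 :=
  mul_one_div_add_le (sqrt_pos.2 (by linarith)) (sqrt_le_sqrt (by linarith))
    (sqrt_add_le_sqrt_div_mul_sqrt_add hc₁ hc hs) (by linarith)

theorem two_mul_mul_vsLossDeriv2_add_le (hc₁ : 0 < c₁) (hc : c₁ ≤ c₂) (hC : 0 ≤ C)
    (hs : 0 ≤ s) :
    2 * s * vsLossDeriv2 c₁ c₂ C s + vsLossDeriv c₁ c₂ C s ≤ (3 + √(c₂ / c₁)) / 2 :=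
  two_mul_add_mul_one_div_add_le (sqrt_pos.2 (by linarith)) (sqrt_le_sqrt (by linarith))
    (sqrt_add_le_sqrt_div_mul_sqrt_add hc₁ hc hs) (by linarith) hs
    (by rw [sq_sqrt (by linarith)]; linarith)

end VarianceStabilizedLoss

/-- Uniform Hessian bound for the averaging variance-stabilization loss (proof of Thm 4.2):
the Wirtinger Hessian quadratic form, realized as the second derivative at `0` of
`t ↦ L_avg(z + t v)`, is bounded by `½(3 + √(c₂/c₁))·‖A‖²·‖(v,v̄)‖₂²` with
`‖(v,v̄)‖₂² = 2‖v‖₂²`, where `A` is the matrix (operator) with rows `aᵢ*` and `‖A‖` its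
spectral norm. -/
theorem stmt_19 (n m : ℕ) (a : Fin m → EuclideanSpace ℂ (Fin n))
    (c₁ c₂ C : ℝ) (hc₁ : 0 < c₁) (hc₂ : c₁ ≤ c₂) (hC : 0 ≤ C)
    (A : EuclideanSpace ℂ (Fin n) →L[ℂ] EuclideanSpace ℂ (Fin m))
    (hA : ∀ z i, A z i = ⟪a i, z⟫_ℂ)
    (Lavg : EuclideanSpace ℂ (Fin n) → ℝ)
    (hLavg : Lavg = fun z => ∑ i, (1 / 2) *
      (Real.sqrt (‖⟪a i, z⟫_ℂ‖ ^ 2 + c₁) + Real.sqrt (‖⟪a i, z⟫_ℂ‖ ^ 2 + c₂) - C) ^ 2) :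
    ∀ z v : EuclideanSpace ℂ (Fin n),
      iteratedDeriv 2 (fun t : ℝ => Lavg (z + t • v)) 0 ≤
        (1 / 2) * (3 + Real.sqrt (c₂ / c₁)) * ‖A‖ ^ 2 * (2 * ‖v‖ ^ 2) := by
  intro z v
  set α : Fin m → ℂ := fun i => ⟪a i, z⟫_ℂ
  set β : Fin m → ℂ := fun i => ⟪a i, v⟫_ℂ
  have hline (i : Fin m) (t : ℝ) : ‖⟪a i, z + t • v⟫_ℂ‖ ^ 2 =
      ‖α i‖ ^ 2 + 2 * ⟪α i, β i⟫_ℝ * t + ‖β i‖ ^ 2 * t ^ 2 := by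
    rw [inner_add_right, RCLike.real_smul_eq_coe_smul (K := ℂ), inner_smul_real_right,
      norm_add_smul_sq]
  have hline_nonneg (i : Fin m) (t : ℝ) :
      0 ≤ ‖α i‖ ^ 2 + 2 * ⟪α i, β i⟫_ℝ * t + ‖β i‖ ^ 2 * t ^ 2 := by
    rw [← hline]; positivity
  have hLavg_line : (fun t : ℝ => Lavg (z + t • v)) = fun t => ∑ i,
      vsLoss c₁ c₂ C (‖α i‖ ^ 2 + 2 * ⟪α i, β i⟫_ℝ * t + ‖β i‖ ^ 2 * t ^ 2) := by
    subst hLavg; simp only [vsLoss, hline]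
  have hAv : ∑ i, ‖β i‖ ^ 2 = ‖A v‖ ^ 2 := by
    simp only [EuclideanSpace.norm_sq_eq, hA, β]
  rw [hLavg_line, iteratedDeriv_two_sum_comp_quadratic
    (fun x hx => hasDerivAt_vsLoss (by linarith) (by linarith))
    (fun x hx => hasDerivAt_vsLossDeriv (by linarith) (by linarith))
    hline_nonneg]
  calc _ ≤ ∑ i, 2 * ((3 + √(c₂ / c₁)) / 2) * ‖β i‖ ^ 2 := Finset.sum_le_sum fun i _ =>
        mul_sq_add_mul_two_mul_le (vsLossDeriv_le hc₁ hc₂ hC (by positivity))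
          (two_mul_mul_vsLossDeriv2_add_le hc₁ hc₂ hC (by positivity)) (by positivity)
          (two_mul_real_inner_sq_le _ _)
    _ = (3 + √(c₂ / c₁)) * ‖A v‖ ^ 2 := by
        rw [← hAv, Finset.mul_sum]
        exact Finset.sum_congr rfl fun i _ => by ring
    _ ≤ (3 + √(c₂ / c₁)) * (‖A‖ * ‖v‖) ^ 2 := by gcongr; exact A.le_opNorm v
    _ = _ := by ring
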